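/- arXiv:1807.10302 — 4 statements merged into one kernel-verified Lean document; each statement's English description precedes it below -/
import Mathlib

section
/- Let G be a finite simple graph and let u and v be coduplicate vertices of G (distinct vertices with N[u] = N[v]). Then mult(−1, G) = mult(−1, G − v) + 1, where G − v is the induced subgraph obtained by deleting v. -/
/-!
Since `N[u] = N[v]`, the matrix `A + I` has equal rows (and, by symmetry, equal columns) at `u`
and `v`. Deleting the duplicate row and then the duplicate column does not change the rank, so
the principal submatrix obtained by deleting `v` has the same rank as `A + I` but one index
fewer; by rank–nullity its nullity, i.e. `mult(-1, G - v)`, is one less than `mult(-1, G)`.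
-/

/-- The multiplicity of `μ` as an eigenvalue of `G`: the dimension of
the kernel of `A(G) - μ I`. -/
noncomputable def SimpleGraph.eigMult {V : Type*} [Fintype V] (G : SimpleGraph V) (μ : ℝ) : ℕ :=
  letI := Classical.decEq V
  letI : DecidableRel G.Adj := Classical.decRel _
  Module.finrank ℝ (LinearMap.ker (Matrix.toLin' (G.adjMatrix ℝ - μ • (1 : Matrix V V ℝ))))

open Module Matrix

theorem Fintype.card_setOf_ne_add_one {α : Type*} [Fintype α] [DecidableEq α] (a : α) :
    Fintype.card ({x | x ≠ a} : Set α) + 1 = Fintype.card α := by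
  rw [← Set.toFinset_card]
  simp only [Set.toFinset_ofPred, Finset.filter_ne', Finset.mem_univ, Finset.card_erase_of_mem,
    Finset.card_univ]
  exact Nat.sub_add_cancel (Fintype.card_pos_iff.2 ⟨a⟩)

theorem Set.range_comp_subtype_ne {ι α : Type*} {f : ι → α} {u v : ι} (huv : u ≠ v)
    (h : f u = f v) : Set.range (fun i : {w | w ≠ v} => f i) = Set.range f := by
  refine (Set.range_comp_subset_range _ f).antisymm ?_
  rintro _ ⟨i, rfl⟩
  by_cases hi : i = v
  · exact ⟨⟨u, huv⟩, hi ▸ h⟩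
  · exact ⟨⟨i, hi⟩, rfl⟩

namespace Matrix

variable {m n K : Type*} [Field K]

theorem finrank_ker_toLin'_add_rank [Fintype n] [DecidableEq n] (A : Matrix m n K) :
    finrank K (LinearMap.ker (toLin' A)) + A.rank = Fintype.card n := by
  rw [rank, ← toLin'_apply', add_comm, LinearMap.finrank_range_add_finrank_ker,
    finrank_pi]

theorem rank_submatrix_row_ne [Finite m] [Fintype n] (A : Matrix m n K) {u v : m}
    (huv : u ≠ v) (h : A u = A v) :
    (A.submatrix ((↑) : ({w | w ≠ v} : Set m) → m) id).rank = A.rank := by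
  rw [rank_eq_finrank_span_row, rank_eq_finrank_span_row]
  exact congrArg (fun s => finrank K (Submodule.span K s)) (Set.range_comp_subtype_ne huv h)

theorem rank_submatrix_col_ne [Fintype m] [Fintype n] [DecidableEq n] (A : Matrix m n K)
    {u v : n} (huv : u ≠ v) (h : Aᵀ u = Aᵀ v) :
    (A.submatrix id ((↑) : ({w | w ≠ v} : Set n) → n)).rank = A.rank := by
  rw [← rank_transpose, transpose_submatrix, rank_submatrix_row_ne _ huv h, rank_transpose]

theorem rank_submatrix_ne [Fintype n] [DecidableEq n] (A : Matrix n n K) {u v : n}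
    (huv : u ≠ v) (hrow : A u = A v) (hcol : Aᵀ u = Aᵀ v) :
    (A.submatrix ((↑) : ({w | w ≠ v} : Set n) → n) ((↑) : ({w | w ≠ v} : Set n) → n)).rank =
      A.rank := by
  rw [← rank_submatrix_row_ne A huv hrow]
  exact rank_submatrix_col_ne (A.submatrix Subtype.val id) huv
    (funext fun _ => congrFun hcol _)

theorem finrank_ker_toLin'_eq_finrank_ker_submatrix_ne_add_one [Fintype n] [DecidableEq n]
    (A : Matrix n n K) {u v : n} (huv : u ≠ v) (hrow : A u = A v) (hcol : Aᵀ u = Aᵀ v) :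
    finrank K (LinearMap.ker (toLin' A)) =
      finrank K (LinearMap.ker
        (A.submatrix ((↑) : ({w | w ≠ v} : Set n) → n)
          ((↑) : ({w | w ≠ v} : Set n) → n)).toLin') + 1 := by
  have hA := finrank_ker_toLin'_add_rank A
  have hB := finrank_ker_toLin'_add_rank
    (A.submatrix ((↑) : ({w | w ≠ v} : Set n) → n) ((↑) : ({w | w ≠ v} : Set n) → n))
  rw [rank_submatrix_ne A huv hrow hcol] at hB
  linarith [Fintype.card_setOf_ne_add_one v]

end Matrix

namespace SimpleGraph

variable {V α : Type*} (G : SimpleGraph V) [DecidableEq V] [DecidableRel G.Adj]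

theorem adjMatrix_add_one_apply [AddMonoidWithOne α] (u w : V) :
    (G.adjMatrix α + 1) u w = if w ∈ insert u (G.neighborSet u) then 1 else 0 := by
  by_cases h : u = w
  · subst h; simp
  · simp [one_apply, h, Ne.symm h]

theorem adjMatrix_add_one_row_eq [AddMonoidWithOne α] {u v : V}
    (h : insert u (G.neighborSet u) = insert v (G.neighborSet v)) :
    (G.adjMatrix α + 1) u = (G.adjMatrix α + 1) v := by
  funext w
  simp only [adjMatrix_add_one_apply, h]

theorem transpose_adjMatrix_add_one [AddMonoidWithOne α] :
    (G.adjMatrix α + 1)ᵀ = G.adjMatrix α + 1 := by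
  rw [transpose_add, transpose_adjMatrix, transpose_one]

theorem adjMatrix_induce_add_one [AddMonoidWithOne α] (s : Set V) :
    (G.induce s).adjMatrix α + 1 = (G.adjMatrix α + 1).submatrix Subtype.val Subtype.val := by
  ext; simp [one_apply, Subtype.ext_iff]

theorem eigMult_eq [Fintype V] (μ : ℝ) :
    G.eigMult μ =
      finrank ℝ (LinearMap.ker (toLin' (G.adjMatrix ℝ - μ • (1 : Matrix V V ℝ)))) := by
  unfold eigMult
  congr!

theorem eigMult_neg_one [Fintype V] :
    G.eigMult (-1) = finrank ℝ (LinearMap.ker (toLin' (G.adjMatrix ℝ + 1))) := by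
  rw [eigMult_eq, neg_smul, one_smul, sub_neg_eq_add]

end SimpleGraph

theorem coduplicate_vertex_mult_neg_one {V : Type*} [Fintype V] [DecidableEq V]
    (G : SimpleGraph V) (u v : V) (huv : u ≠ v)
    (hdup : insert u (G.neighborSet u) = insert v (G.neighborSet v)) :
    G.eigMult (-1) = (G.induce {w | w ≠ v}).eigMult (-1) + 1 := by
  classical
  rw [G.eigMult_neg_one, (G.induce _).eigMult_neg_one, G.adjMatrix_induce_add_one]
  have hrow := G.adjMatrix_add_one_row_eq (α := ℝ) hdup
  have hcol : (G.adjMatrix ℝ + 1)ᵀ u = (G.adjMatrix ℝ + 1)ᵀ v := by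
    rwa [G.transpose_adjMatrix_add_one]
  exact finrank_ker_toLin'_eq_finrank_ker_submatrix_ne_add_one _ huv hrow hcol
end

section
/- Any two connected anti-regular graphs with the same number n ≥ 2 of vertices are isomorphic; that is, up to isomorphism there is at most one connected anti-regular graph on n vertices. -/
/-!
A connected anti-regular graph on `n + 1 ≥ 3` vertices has all degrees in `[1, n]`, and the `n`
vertices other than one member of the tied pair take each of these values exactly once. So there
is a universal vertex `w` of degree `n`, and a vertex `p` of degree `1`; as `p` has only one
neighbour, there is no other universal vertex, so `w` lies outside the tied pair. Deleting `w` and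
complementing sends each degree `d` to `n - d`, so the result is again anti-regular, and it is
connected because `p` becomes universal. By induction both graphs reduce, step by step, to the
complete graph on two vertices, and an isomorphism of the reduced graphs extends by matching the
deleted universal vertices.
-/

/-- A graph on at least two vertices is anti-regular if exactly one unordered pair
of distinct vertices has equal degrees. -/
def SimpleGraph.IsAntiRegular {V : Type*} [Fintype V] (G : SimpleGraph V) : Prop :=
  letI := Classical.decEq V
  letI : DecidableRel G.Adj := Classical.decRel _
  2 ≤ Fintype.card V ∧ ∃ u v : V, u ≠ v ∧ G.degree u = G.degree v ∧
    ∀ a b : V, a ≠ b → G.degree a = G.degree b → ({a, b} : Set V) = {u, v}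

namespace SimpleGraph

variable {V W : Type*} {G : SimpleGraph V} {H : SimpleGraph W}

def Iso.compl (e : G ≃g H) : Gᶜ ≃g Hᶜ where
  toEquiv := e.toEquiv
  map_rel_iff' {a b} := by
    simpa [e.injective.ne_iff, not_iff_not] using fun _ : a ≠ b => e.map_adj_iff

def Iso.extendUniversal [DecidableEq V] [DecidableEq W] {v : V} {w : W}
    (hv : G.IsUniversal v) (hw : H.IsUniversal w) (e : G.induce {v}ᶜ ≃g H.induce {w}ᶜ) :
    G ≃g H where
  toFun x := if hx : x = v then w else e ⟨x, hx⟩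
  invFun y := if hy : y = w then v else e.symm ⟨y, hy⟩
  left_inv x := by
    by_cases hx : x = v
    · simp [hx]
    · simp [hx, Set.mem_compl_singleton_iff.mp (e ⟨x, hx⟩).2]
  right_inv y := by
    by_cases hy : y = w
    · simp [hy]
    · simp [hy, Set.mem_compl_singleton_iff.mp (e.symm ⟨y, hy⟩).2]
  map_rel_iff' {x y} := by
    by_cases hx : x = v <;> by_cases hy : y = v
    · simp [hx, hy]
    · simp [hx, hy, hv (Ne.symm hy), hw (Ne.symm (e ⟨y, hy⟩).2)]
    · simp [hx, hy, (hv (Ne.symm hx)).symm, (hw (Ne.symm (e ⟨x, hx⟩).2)).symm]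
    · simpa [hx, hy] using e.map_adj_iff (v := ⟨x, hx⟩) (w := ⟨y, hy⟩)

variable [Fintype V] [DecidableRel G.Adj]

lemma Connected.eq_top_of_card_eq_two (hc : G.Connected) (h2 : Fintype.card V = 2) :
    G = ⊤ := by
  have : Nontrivial V := Fintype.one_lt_card_iff_nontrivial.mp (by omega)
  refine eq_top_iff_forall_isUniversal.mpr fun v => (G.degree_eq_card_sub_one v).mp ?_
  have := hc.preconnected.degree_pos_of_nontrivial v
  have := G.degree_lt_card_verts v
  omega

lemma degree_compl_induce_compl_singleton [DecidableEq V] {v : V} (hv : G.IsUniversal v)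
    (x : ↥({v}ᶜ : Set V)) :
    (G.induce {v}ᶜ)ᶜ.degree x = Fintype.card V - 1 - G.degree x := by
  have hx : G.Adj x v := (hv (Ne.symm x.2)).symm
  have hind : (G.induce {v}ᶜ).degree x = G.degree x - 1 := by
    rw [← card_neighborFinset_eq_degree, ← Finset.card_map (.subtype _),
      map_neighborFinset_induce, Set.toFinset_compl, Set.toFinset_singleton,
      ← Finset.sdiff_eq_inter_compl, Finset.sdiff_singleton_eq_erase,
      Finset.card_erase_of_mem (by simpa using hx), card_neighborFinset_eq_degree]
  rw [degree_compl, hind, Fintype.card_compl_set, Set.card_singleton]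
  have := hx.degree_pos_left
  omega

variable (G) in
def IsOnlyDegreeTie (u v : V) : Prop :=
  u ≠ v ∧ G.degree u = G.degree v ∧
    ∀ a b : V, a ≠ b → G.degree a = G.degree b → ({a, b} : Set V) = {u, v}

lemma isAntiRegular_iff :
    G.IsAntiRegular ↔ 2 ≤ Fintype.card V ∧ ∃ u v, G.IsOnlyDegreeTie u v := by
  unfold IsAntiRegular IsOnlyDegreeTie
  congr!

namespace IsOnlyDegreeTie

variable {u v : V}

lemma eq_of_degree_eq (h : G.IsOnlyDegreeTie u v) {a b : V} (ha : a ≠ u) (hb : b ≠ u)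
    (hab : G.degree a = G.degree b) : a = b := by
  by_contra hne
  rcases Set.pair_eq_pair_iff.mp (h.2.2 a b hne hab) with ⟨rfl, -⟩ | ⟨-, rfl⟩
  exacts [ha rfl, hb rfl]

lemma exists_degree_eq (h : G.IsOnlyDegreeTie u v) (hc : G.Connected) {k : ℕ}
    (hk : k ∈ Finset.Icc 1 (Fintype.card V - 1)) : ∃ x, x ≠ u ∧ G.degree x = k := by
  classical
  have : Nontrivial V := ⟨⟨u, v, h.1⟩⟩
  have hmaps : Set.MapsTo (G.degree ·) (Finset.univ.erase u : Set V)
      (Finset.Icc 1 (Fintype.card V - 1) : Set ℕ) :=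
    fun x _ => by
      have := hc.preconnected.degree_pos_of_nontrivial x
      have := G.degree_lt_card_verts x
      simp only [Finset.mem_coe, Finset.mem_Icc]
      omega
  have hinj : Set.InjOn (G.degree ·) (Finset.univ.erase u : Set V) := fun a ha b hb =>
    h.eq_of_degree_eq (Finset.ne_of_mem_erase ha) (Finset.ne_of_mem_erase hb)
  obtain ⟨x, hx, rfl⟩ := Finset.surjOn_of_injOn_of_card_le _ hmaps hinj (by simp) hk
  exact ⟨x, Finset.ne_of_mem_erase hx, rfl⟩

lemma degree_ne_card_sub_one (h : G.IsOnlyDegreeTie u v) (hc : G.Connected)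
    (h3 : 3 ≤ Fintype.card V) : G.degree u ≠ Fintype.card V - 1 := by
  intro hu
  obtain ⟨p, hpu, hp⟩ := h.exists_degree_eq hc (k := 1) (by simp; omega)
  obtain ⟨w, hwu, hw⟩ := h.exists_degree_eq hc (k := Fintype.card V - 1) (by simp; omega)
  have hpw : p ≠ w := by rintro rfl; omega
  -- `p` has a single neighbour, yet is adjacent to both universal vertices `u ≠ w`
  obtain ⟨q, -, hq⟩ := degree_eq_one_iff_existsUnique_adj.mp hp
  have hu' : G.IsUniversal u := (G.degree_eq_card_sub_one u).mp hu
  have hw' : G.IsUniversal w := (G.degree_eq_card_sub_one w).mp hw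
  exact hwu ((hq w (hw' hpw.symm).symm).trans (hq u (hu' hpu.symm).symm).symm)

lemma exists_isUniversal (h : G.IsOnlyDegreeTie u v) (hc : G.Connected)
    (h3 : 3 ≤ Fintype.card V) : ∃ w, G.IsUniversal w ∧ u ≠ w ∧ v ≠ w := by
  obtain ⟨w, hwu, hw⟩ := h.exists_degree_eq hc (k := Fintype.card V - 1) (by simp; omega)
  refine ⟨w, (G.degree_eq_card_sub_one w).mp hw, hwu.symm, ?_⟩
  rintro rfl
  exact h.degree_ne_card_sub_one hc h3 (h.2.1.trans hw)

lemma compl_induce [DecidableEq V] (h : G.IsOnlyDegreeTie u v) {w : V} (hw : G.IsUniversal w)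
    (hu : u ∈ ({w}ᶜ : Set V)) (hv : v ∈ ({w}ᶜ : Set V)) :
    (G.induce {w}ᶜ)ᶜ.IsOnlyDegreeTie ⟨u, hu⟩ ⟨v, hv⟩ := by
  refine ⟨fun huv => h.1 (congrArg Subtype.val huv), ?_, fun a b hab hdeg => ?_⟩
  · simp only [degree_compl_induce_compl_singleton hw, h.2.1]
  rw [degree_compl_induce_compl_singleton hw, degree_compl_induce_compl_singleton hw] at hdeg
  have := G.degree_lt_card_verts a
  have := G.degree_lt_card_verts b
  rcases Set.pair_eq_pair_iff.mp (h.2.2 a b (Subtype.coe_injective.ne hab) (by omega)) with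
    ⟨ha, hb⟩ | ⟨ha, hb⟩
  · rw [show a = ⟨u, hu⟩ from Subtype.ext ha, show b = ⟨v, hv⟩ from Subtype.ext hb]
  · rw [show a = ⟨v, hv⟩ from Subtype.ext ha, show b = ⟨u, hu⟩ from Subtype.ext hb,
      Set.pair_comm]

end IsOnlyDegreeTie

lemma isUniversal_compl_induce [DecidableEq V] {w p : V} (hw : G.IsUniversal w)
    (hp : G.degree p = 1) (hpw : p ≠ w) : (G.induce {w}ᶜ)ᶜ.IsUniversal ⟨p, hpw⟩ := by
  rw [← degree_eq_card_sub_one, degree_compl_induce_compl_singleton hw, Fintype.card_compl_set,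
    Set.card_singleton, hp]

lemma IsAntiRegular.exists_isUniversal_compl_induce [DecidableEq V] (ha : G.IsAntiRegular)
    (hc : G.Connected) (h3 : 3 ≤ Fintype.card V) :
    ∃ w, G.IsUniversal w ∧ (G.induce {w}ᶜ)ᶜ.Connected ∧
      (G.induce {w}ᶜ)ᶜ.IsAntiRegular := by
  obtain ⟨-, u, v, h⟩ := isAntiRegular_iff.mp ha
  obtain ⟨w, hw, hu, hv⟩ := h.exists_isUniversal hc h3
  obtain ⟨p, -, hp⟩ := h.exists_degree_eq hc (k := 1) (by simp; omega)
  have hpw : p ≠ w := by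
    rintro rfl
    have := (G.degree_eq_card_sub_one p).mpr hw
    omega
  refine ⟨w, hw, .of_isUniversal (isUniversal_compl_induce hw hp hpw), isAntiRegular_iff.mpr
    ⟨?_, _, _, h.compl_induce hw hu hv⟩⟩
  rw [Fintype.card_compl_set, Set.card_singleton]
  omega

end SimpleGraph

theorem connected_antiRegular_unique_general {V W : Type*} [Fintype V] [Fintype W]
    (G : SimpleGraph V) (H : SimpleGraph W) (hcard : Fintype.card V = Fintype.card W)
    (hGc : G.Connected) (hGa : G.IsAntiRegular)
    (hHc : H.Connected) (hHa : H.IsAntiRegular) :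
    Nonempty (G ≃g H) := by
  classical
  induction hn : Fintype.card V using Nat.strong_induction_on generalizing V W with
  | _ n ih =>
  obtain h2 | h3 : Fintype.card V = 2 ∨ 3 ≤ Fintype.card V := by
    have := hGa.1
    omega
  · rw [hGc.eq_top_of_card_eq_two h2, hHc.eq_top_of_card_eq_two (hcard ▸ h2)]
    exact ⟨.completeGraph (Fintype.equivOfCardEq hcard)⟩
  obtain ⟨v, hv, hGc', hGa'⟩ := hGa.exists_isUniversal_compl_induce hGc h3
  obtain ⟨w, hw, hHc', hHa'⟩ := hHa.exists_isUniversal_compl_induce hHc (hcard ▸ h3)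
  have hcardG : Fintype.card ↥({v}ᶜ : Set V) = n - 1 := by
    rw [Fintype.card_compl_set, Set.card_singleton, hn]
  have hcardH : Fintype.card ↥({w}ᶜ : Set W) = n - 1 := by
    rw [Fintype.card_compl_set, Set.card_singleton, ← hcard, hn]
  obtain ⟨e⟩ := ih (n - 1) (by omega) _ _ (hcardG.trans hcardH.symm) hGc' hGa' hHc' hHa' hcardG
  exact ⟨.extendUniversal hv hw (by simpa using e.compl)⟩

theorem connected_antiRegular_unique {V W : Type*} [Fintype V] [Fintype W]
    (G : SimpleGraph V) (H : SimpleGraph W) (hcard : Fintype.card V = Fintype.card W)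
    (hn : 2 ≤ Fintype.card V)
    (hGc : G.Connected) (hGa : G.IsAntiRegular)
    (hHc : H.Connected) (hHa : H.IsAntiRegular) :
    Nonempty (G ≃g H) :=
  connected_antiRegular_unique_general G H hcard hGc hGa hHc hHa
end

section
/- A finite simple graph G is a threshold graph if and only if G contains no induced subgraph isomorphic to the path P4 on four vertices, no induced subgraph isomorphic to 2K2 (the disjoint union of two edges), and no induced subgraph isomorphic to the cycle C4 on four vertices. -/
/-- A graph is a threshold graph if adjacency is determined by vertex weights
exceeding a threshold. -/
def SimpleGraph.IsThreshold {V : Type*} (G : SimpleGraph V) : Prop :=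
  ∃ (S : ℝ) (w : V → ℝ), ∀ u v : V, u ≠ v → (G.Adj u v ↔ S < w u + w v)

/-- The path graph on four vertices, with edges 0-1, 1-2, 2-3. -/
def pathP4 : SimpleGraph (Fin 4) :=
  SimpleGraph.fromRel (fun x y => y.val = x.val + 1)

/-- The cycle graph on four vertices. -/
def cycleC4 : SimpleGraph (ZMod 4) :=
  SimpleGraph.fromRel (fun x y => y = x + 1)

/-- The disjoint union of two edges: edges 0-1 and 2-3 on four vertices. -/
def twoK2 : SimpleGraph (Fin 4) :=
  SimpleGraph.fromRel (fun x y => (x = 0 ∧ y = 1) ∨ (x = 2 ∧ y = 3))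

/-!
Call `a, b, c, d` an alternating four-cycle if `ab` and `cd` are edges while `bc` and `da` are
not. Threshold weights forbid it: `w a + w b + w c + w d` would exceed `2 S` and be at most
`2 S`. The two diagonals `ac` and `bd` decide which graph `{a, b, c, d}` induces, and the four
possibilities are `P4` (twice), `C4` and `2K2`; so containing an induced copy of one of the
three forbidden graphs is the same as containing an alternating four-cycle.

Conversely, without alternating four-cycles a vertex `v` of maximum degree is adjacent to every
vertex `x ≠ v` that has a neighbour `u`: otherwise `N(v) \ {u} ⊊ N(u) \ {v}`, so `u` would
have larger degree. Hence `v` is dominating, or some non-neighbour of `v` is isolated. Deleting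
that vertex, weighting the rest by induction and giving it a huge or a tiny weight shows that
the graph is threshold.
-/

namespace SimpleGraph

variable {V W : Type*} {G : SimpleGraph V} {H : SimpleGraph W}

def HasAlternatingFourCycle (G : SimpleGraph V) : Prop :=
  ∃ a b c d, G.Adj a b ∧ G.Adj c d ∧ b ≠ c ∧ ¬G.Adj b c ∧ d ≠ a ∧ ¬G.Adj d a

theorem IsThreshold.not_hasAlternatingFourCycle (hG : G.IsThreshold) :
    ¬G.HasAlternatingFourCycle := by
  rintro ⟨a, b, c, d, hab, hcd, hbc, hbc', hda, hda'⟩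
  obtain ⟨S, w, hw⟩ := hG
  have := (hw a b hab.ne).1 hab
  have := (hw c d hcd.ne).1 hcd
  have := not_lt.1 <| (hw b c hbc).not.1 hbc'
  have := not_lt.1 <| (hw d a hda).not.1 hda'
  linarith

theorem HasAlternatingFourCycle.map (f : H ↪g G) (h : H.HasAlternatingFourCycle) :
    G.HasAlternatingFourCycle := by
  obtain ⟨a, b, c, d, hab, hcd, hbc, hbc', hda, hda'⟩ := h
  exact ⟨f a, f b, f c, f d, f.map_adj_iff.2 hab, f.map_adj_iff.2 hcd, f.injective.ne hbc,
    mt f.map_adj_iff.1 hbc', f.injective.ne hda, mt f.map_adj_iff.1 hda'⟩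

theorem hasAlternatingFourCycle_pathP4 : pathP4.HasAlternatingFourCycle :=
  ⟨1, 0, 2, 3, by simp [pathP4]⟩

theorem hasAlternatingFourCycle_twoK2 : twoK2.HasAlternatingFourCycle :=
  ⟨0, 1, 2, 3, by simp [twoK2]⟩

theorem hasAlternatingFourCycle_cycleC4 : cycleC4.HasAlternatingFourCycle :=
  ⟨0, 1, 3, 2, by simp [cycleC4]; decide⟩

theorem nonempty_pathP4_embedding {a b c d : V} (hab : G.Adj a b) (hbc : G.Adj b c)
    (hcd : G.Adj c d) (hac : ¬G.Adj a c) (had : ¬G.Adj a d) (hbd : ¬G.Adj b d) :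
    Nonempty (pathP4 ↪g G) := by
  refine ⟨⟨⟨![a, b, c, d], fun i j h => ?_⟩,
    fun {i j} => show G.Adj (![a, b, c, d] i) (![a, b, c, d] j) ↔ _ from ?_⟩⟩ <;>
  fin_cases i <;> fin_cases j <;> simp_all [pathP4, G.adj_comm]

theorem nonempty_twoK2_embedding {a b c d : V} (hab : G.Adj a b) (hcd : G.Adj c d)
    (hac : ¬G.Adj a c) (had : ¬G.Adj a d) (hbc : ¬G.Adj b c) (hbd : ¬G.Adj b d) :
    Nonempty (twoK2 ↪g G) := by
  refine ⟨⟨⟨![a, b, c, d], fun i j h => ?_⟩,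
    fun {i j} => show G.Adj (![a, b, c, d] i) (![a, b, c, d] j) ↔ _ from ?_⟩⟩ <;>
  fin_cases i <;> fin_cases j <;> simp_all [twoK2, G.adj_comm]

theorem nonempty_cycleC4_embedding {a b c d : V} (hab : G.Adj a b) (hbc : G.Adj b c)
    (hcd : G.Adj c d) (hda : G.Adj d a) (hac : ¬G.Adj a c) (hbd : ¬G.Adj b d) (hac' : a ≠ c)
    (hbd' : b ≠ d) : Nonempty (cycleC4 ↪g G) := by
  -- `ZMod 4` is `Fin 4` by definition, and `fin_cases` only works on the latter
  change Nonempty (fromRel (fun x y : Fin 4 => y = x + 1) ↪g G)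
  refine ⟨⟨⟨![a, b, c, d], fun i j h => ?_⟩,
    fun {i j} => show G.Adj (![a, b, c, d] i) (![a, b, c, d] j) ↔ _ from ?_⟩⟩ <;>
  fin_cases i <;> fin_cases j <;> simp_all [G.adj_comm]

theorem hasAlternatingFourCycle_iff :
    G.HasAlternatingFourCycle ↔
      Nonempty (pathP4 ↪g G) ∨ Nonempty (twoK2 ↪g G) ∨ Nonempty (cycleC4 ↪g G) := by
  constructor
  · rintro ⟨a, b, c, d, hab, hcd, hbc, hbc', hda, hda'⟩
    rw [G.adj_comm] at hda'
    by_cases hac : G.Adj a c <;> by_cases hbd : G.Adj b d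
    · exact .inr <| .inr <|
        nonempty_cycleC4_embedding hab hbd hcd.symm hac.symm hda' hbc' hda.symm hbc
    · exact .inl <| nonempty_pathP4_embedding hab.symm hac hcd hbc' hbd hda'
    · exact .inl <| nonempty_pathP4_embedding hab hbd hcd.symm hda' hac hbc'
    · exact .inr <| .inl <| nonempty_twoK2_embedding hab hcd hac hda' hbc' hbd
  · rintro (⟨⟨f⟩⟩ | ⟨⟨f⟩⟩ | ⟨⟨f⟩⟩)
    exacts [hasAlternatingFourCycle_pathP4.map f, hasAlternatingFourCycle_twoK2.map f,
      hasAlternatingFourCycle_cycleC4.map f]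

theorem adj_of_forall_degree_le [Fintype V] [DecidableRel G.Adj]
    (hG : ¬G.HasAlternatingFourCycle) {v : V} (hv : ∀ u, G.degree u ≤ G.degree v) {u x : V}
    (hux : G.Adj u x) (hxv : x ≠ v) : G.Adj v x := by
  classical
  by_contra hvx
  have hsub : (G.neighborFinset v).erase u ⊆ (G.neighborFinset u).erase v := by
    intro y hy
    simp only [Finset.mem_erase, mem_neighborFinset] at hy ⊢
    refine ⟨(G.ne_of_adj hy.2).symm, ?_⟩
    by_contra huy
    exact hG ⟨u, x, v, y, hux, hy.2, hxv, fun h => hvx h.symm, hy.1, fun h => huy h.symm⟩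
  have hlt := Finset.card_lt_card <|
    (Finset.ssubset_iff_of_subset hsub).2 ⟨x, by simp [hux, hxv], by simp [hvx]⟩
  have := hv u
  simp only [Finset.card_erase_eq_ite, mem_neighborFinset, card_neighborFinset_eq_degree,
    G.adj_comm u v] at hlt
  split_ifs at hlt <;> omega

theorem exists_forall_adj_or_forall_not_adj [Finite V] [Nonempty V]
    (hG : ¬G.HasAlternatingFourCycle) :
    ∃ v, (∀ u ≠ v, G.Adj v u) ∨ ∀ u, ¬G.Adj v u := by
  classical
  have := Fintype.ofFinite V
  obtain ⟨v, hv⟩ := G.exists_maximal_degree_vertex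
  by_cases hdom : ∀ u ≠ v, G.Adj v u
  · exact ⟨v, .inl hdom⟩
  push Not at hdom
  obtain ⟨u, huv, hvu⟩ := hdom
  exact ⟨u, .inr fun x hux =>
    hvu <| adj_of_forall_degree_le hG (fun w => hv ▸ G.degree_le_maxDegree w) hux.symm huv⟩

theorem isThreshold_of_induce_compl_singleton [Finite V] {v : V}
    (hv : (∀ u ≠ v, G.Adj v u) ∨ ∀ u, ¬G.Adj v u) (h : (G.induce {v}ᶜ).IsThreshold) :
    G.IsThreshold := by
  classical
  obtain ⟨S, w, hw⟩ := h
  obtain ⟨c, hc⟩ : ∃ c : ℝ, ∀ u (hu : u ≠ v), G.Adj v u ↔ S < c + w ⟨u, hu⟩ := by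
    rcases hv with hv | hv
    · obtain ⟨c, hc⟩ := (Set.finite_range fun u : ({v}ᶜ : Set V) => S - w u).bddAbove
      refine ⟨c + 1, fun u hu => iff_of_true (hv u hu) ?_⟩
      have := hc ⟨⟨u, hu⟩, rfl⟩
      linarith
    · obtain ⟨c, hc⟩ := (Set.finite_range fun u : ({v}ᶜ : Set V) => S - w u).bddBelow
      refine ⟨c, fun u hu => iff_of_false (hv u) ?_⟩
      have : c ≤ S - w ⟨u, hu⟩ := hc ⟨⟨u, hu⟩, rfl⟩
      linarith
  refine ⟨S, fun u => if hu : u = v then c else w ⟨u, hu⟩, fun a b hab => ?_⟩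
  rcases eq_or_ne a v with rfl | ha
  · simpa [hab.symm] using hc b hab.symm
  rcases eq_or_ne b v with rfl | hb
  · simpa [ha, G.adj_comm, add_comm] using hc a ha
  simpa [ha, hb] using hw ⟨a, ha⟩ ⟨b, hb⟩ (Subtype.coe_ne_coe.1 hab)

theorem isThreshold_of_not_hasAlternatingFourCycle {V : Type*} [Finite V]
    {G : SimpleGraph V} (hG : ¬G.HasAlternatingFourCycle) : G.IsThreshold := by
  cases isEmpty_or_nonempty V with
  | inl _ => exact ⟨0, 0, fun u => isEmptyElim u⟩
  | inr _ =>
    obtain ⟨v, hv⟩ := exists_forall_adj_or_forall_not_adj hG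
    have : Nat.card ({v}ᶜ : Set V) < Nat.card V := Finite.card_subtype_lt (x := v) (by simp)
    exact isThreshold_of_induce_compl_singleton hv <|
      isThreshold_of_not_hasAlternatingFourCycle fun h => hG (h.map (Embedding.induce _))
termination_by Nat.card V

theorem isThreshold_iff_not_hasAlternatingFourCycle [Finite V] :
    G.IsThreshold ↔ ¬G.HasAlternatingFourCycle :=
  ⟨IsThreshold.not_hasAlternatingFourCycle, isThreshold_of_not_hasAlternatingFourCycle⟩

end SimpleGraph

theorem threshold_iff_forbidden_subgraphs {V : Type*} [Fintype V] (G : SimpleGraph V) :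
    G.IsThreshold ↔
      (¬ Nonempty (pathP4 ↪g G)) ∧ (¬ Nonempty (twoK2 ↪g G)) ∧
        (¬ Nonempty (cycleC4 ↪g G)) := by
  rw [SimpleGraph.isThreshold_iff_not_hasAlternatingFourCycle,
    SimpleGraph.hasAlternatingFourCycle_iff]
  tauto
end

section
/- Let h ≥ 1 and let m_1,…,m_h, n_1,…,n_h be positive integers. The graph NSG(m_1,…,m_h; n_1,…,n_h) is anti-regular if and only if n_1 = ⋯ = n_h = 1, m_1 = ⋯ = m_{h−1} = 1, and m_h ∈ {1, 2}. -/
/-- The nested split graph `NSG(m₁,…,m_h; n₁,…,n_h)`: the vertex set is the disjoint union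
of `U₁,…,U_h, V₁,…,V_h` with `|Uᵢ| = mᵢ`, `|Vᵢ| = nᵢ`; the `Vᵢ`'s form a clique,
the `Uᵢ`'s form an independent set, and a vertex of `Uᵢ` is adjacent to a vertex of `Vⱼ`
iff `j ≤ i`. -/
def NSG (h : ℕ) (m n : Fin h → ℕ) :
    SimpleGraph ((Σ i : Fin h, Fin (m i)) ⊕ (Σ i : Fin h, Fin (n i))) where
  Adj x y :=
    match x, y with
    | Sum.inl _, Sum.inl _ => False
    | Sum.inl ⟨i, _⟩, Sum.inr ⟨j, _⟩ => j ≤ i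
    | Sum.inr ⟨j, _⟩, Sum.inl ⟨i, _⟩ => j ≤ i
    | Sum.inr a, Sum.inr b => a ≠ b
  symm := by
    constructor
    rintro (⟨i, a⟩ | ⟨i, a⟩) (⟨j, b⟩ | ⟨j, b⟩) hadj
    · exact hadj
    · exact hadj
    · exact hadj
    · exact Ne.symm hadj
  loopless := by
    constructor
    rintro (⟨i, a⟩ | ⟨i, a⟩) hadj
    · exact hadj
    · exact hadj rfl

/-!
A vertex of `Uᵢ` has degree `n₁ + ⋯ + nᵢ`, strictly increasing in `i`, and a vertex of `Vⱼ` has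
degree `(mⱼ + ⋯ + m_h) + (n₁ + ⋯ + n_h) - 1`, strictly decreasing in `j` and never smaller than
the degree of a vertex of any `Uᵢ`. Hence two vertices have equal degree exactly when they lie in
the same block, or when they are a vertex of `U_h` and a vertex of `V_h` and `m_h = 1`.

In particular a vertex of `U_h` always shares its degree with a second vertex, so anti-regularity
forces every block not containing it to be a singleton and `m_h ≤ 2`. Conversely, for these block
sizes the degree is injective once the vertex of `V_h` (if `m_h = 1`) or the second vertex of
`U_h` (if `m_h = 2`) is removed.
-/

theorem Finset.sum_lt_sum_of_ssubset_of_pos {ι M : Type*} [AddCommMonoid M] [PartialOrder M]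
    [IsOrderedCancelAddMonoid M] {f : ι → M} {s t : Finset ι} (hst : s ⊂ t)
    (hf : ∀ i ∈ t, 0 < f i) : ∑ i ∈ s, f i < ∑ i ∈ t, f i := by
  obtain ⟨i, hit, his⟩ := Finset.exists_of_ssubset hst
  exact Finset.sum_lt_sum_of_subset hst.subset hit his (hf i hit) fun j hj _ => (hf j hj).le

section IntervalSums

variable {ι M : Type*} [PartialOrder ι] [AddCommMonoid M] [PartialOrder M]
  [IsOrderedCancelAddMonoid M] {f : ι → M}

theorem strictMono_sum_Iic [LocallyFiniteOrderBot ι] (hf : ∀ i, 0 < f i) :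
    StrictMono fun i => ∑ j ∈ Finset.Iic i, f j := fun _ _ hii' =>
  Finset.sum_lt_sum_of_ssubset_of_pos (Finset.Iic_ssubset_Iic.mpr hii') fun j _ => hf j

theorem strictAnti_sum_Ici [LocallyFiniteOrderTop ι] (hf : ∀ i, 0 < f i) :
    StrictAnti fun i => ∑ j ∈ Finset.Ici i, f j := fun _ _ hii' =>
  Finset.sum_lt_sum_of_ssubset_of_pos (Finset.Ici_ssubset_Ici.mpr hii') fun j _ => hf j

end IntervalSums

namespace SimpleGraph

variable {V : Type*} [Fintype V] {G : SimpleGraph V} [DecidableRel G.Adj]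

theorem isAntiRegular_iff_s16 : G.IsAntiRegular ↔ ∃ u v, u ≠ v ∧ G.degree u = G.degree v ∧
    ∀ a b, a ≠ b → G.degree a = G.degree b → ({a, b} : Set V) = {u, v} := by
  rw [IsAntiRegular, and_iff_right_of_imp fun ⟨u, v, huv, _⟩ =>
    Fintype.one_lt_card_iff.mpr ⟨u, v, huv⟩]
  convert Iff.rfl

theorem IsAntiRegular.eq_or_eq_of_degree_eq (hG : G.IsAntiRegular) {x y a b : V} (hxy : x ≠ y)
    (hdxy : G.degree x = G.degree y) (hab : a ≠ b) (hdab : G.degree a = G.degree b) :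
    x = a ∨ x = b := by
  obtain ⟨u, v, -, -, hpair⟩ := isAntiRegular_iff_s16.mp hG
  have hx : x ∈ ({a, b} : Set V) := by
    rw [hpair a b hab hdab, ← hpair x y hxy hdxy]
    exact Set.mem_insert x {y}
  simpa using hx

theorem isAntiRegular_of_injOn_degree {u v : V} (huv : u ≠ v) (hd : G.degree u = G.degree v)
    (hinj : Set.InjOn (fun w => G.degree w) {v}ᶜ) : G.IsAntiRegular := by
  refine isAntiRegular_iff_s16.mpr ⟨u, v, huv, hd, fun a b hab hdab => ?_⟩
  by_cases ha : a = v
  · subst ha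
    rw [hinj (Ne.symm hab) huv (hdab.symm.trans hd.symm), Set.pair_comm]
  by_cases hb : b = v
  · subst hb
    rw [hinj ha huv (hdab.trans hd.symm)]
  exact absurd (hinj ha hb hdab) hab

end SimpleGraph

namespace NSG

variable {h : ℕ} {m n : Fin h → ℕ} [DecidableRel (NSG h m n).Adj]

theorem degree_inl (i : Fin h) (a : Fin (m i)) :
    (NSG h m n).degree (.inl ⟨i, a⟩) = ∑ j ∈ Finset.Iic i, n j := by
  have hnbr : (NSG h m n).neighborFinset (.inl ⟨i, a⟩) =
      (∅ : Finset _).disjSum ((Finset.Iic i).sigma fun _ => Finset.univ) := by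
    ext x
    rw [SimpleGraph.mem_neighborFinset]
    rcases x with ⟨j, b⟩ | ⟨j, b⟩ <;> simp [NSG]
  simp [← SimpleGraph.card_neighborFinset_eq_degree, hnbr]

theorem degree_inr_add_one (j : Fin h) (b : Fin (n j)) :
    (NSG h m n).degree (.inr ⟨j, b⟩) + 1 = ∑ i ∈ Finset.Ici j, m i + ∑ k, n k := by
  classical
  have hnbr : (NSG h m n).neighborFinset (.inr ⟨j, b⟩) =
      ((Finset.Ici j).sigma fun _ => Finset.univ).disjSum (Finset.univ.erase ⟨j, b⟩) := by
    ext x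
    rw [SimpleGraph.mem_neighborFinset]
    rcases x with ⟨i, a⟩ | ⟨i, a⟩
    · simp [NSG]
    · simp only [Finset.inr_mem_disjSum, Finset.mem_erase, Finset.mem_univ, and_true, ne_comm]
      rfl
  rw [← SimpleGraph.card_neighborFinset_eq_degree, hnbr, Finset.card_disjSum, add_assoc,
    Finset.card_erase_add_one (Finset.mem_univ _)]
  simp

theorem degree_inl_eq {i : Fin h} (a a' : Fin (m i)) :
    (NSG h m n).degree (.inl ⟨i, a⟩) = (NSG h m n).degree (.inl ⟨i, a'⟩) := by
  rw [degree_inl, degree_inl]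

theorem degree_inr_eq {j : Fin h} (b b' : Fin (n j)) :
    (NSG h m n).degree (.inr ⟨j, b⟩) = (NSG h m n).degree (.inr ⟨j, b'⟩) := by
  rw [← add_left_inj 1, degree_inr_add_one, degree_inr_add_one]

theorem degree_inl_eq_degree_inl_iff (hn : ∀ j, 0 < n j) {i i' : Fin h} (a : Fin (m i))
    (a' : Fin (m i')) :
    (NSG h m n).degree (.inl ⟨i, a⟩) = (NSG h m n).degree (.inl ⟨i', a'⟩) ↔ i = i' := by
  rw [degree_inl, degree_inl]
  exact (strictMono_sum_Iic hn).injective.eq_iff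

theorem degree_inr_eq_degree_inr_iff (hm : ∀ i, 0 < m i) {j j' : Fin h} (b : Fin (n j))
    (b' : Fin (n j')) :
    (NSG h m n).degree (.inr ⟨j, b⟩) = (NSG h m n).degree (.inr ⟨j', b'⟩) ↔ j = j' := by
  rw [← add_left_inj 1, degree_inr_add_one, degree_inr_add_one, add_left_inj]
  exact (strictAnti_sum_Ici hm).injective.eq_iff

theorem degree_inl_eq_degree_inr_iff (hm : ∀ i, 0 < m i) (hn : ∀ j, 0 < n j) {i j : Fin h}
    (a : Fin (m i)) (b : Fin (n j)) :
    (NSG h m n).degree (.inl ⟨i, a⟩) = (NSG h m n).degree (.inr ⟨j, b⟩) ↔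
      IsTop i ∧ IsTop j ∧ m j = 1 := by
  rw [← add_left_inj 1, degree_inl, degree_inr_add_one]
  have hA : ∑ k ∈ Finset.Iic i, n k ≤ ∑ k, n k :=
    Finset.sum_le_sum_of_subset (Finset.subset_univ _)
  have hB : ∀ k, m k ≤ ∑ l ∈ Finset.Ici k, m l := fun k =>
    Finset.single_le_sum (fun _ _ => Nat.zero_le _) (Finset.mem_Ici.mpr le_rfl)
  constructor
  · intro hdeg
    have hmj := hm j
    have hBj := hB j
    refine ⟨fun k => ?_, fun k => ?_, by omega⟩
    · by_contra hki
      have := Finset.sum_lt_sum_of_subset (Finset.subset_univ (Finset.Iic i)) (Finset.mem_univ k)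
        (by simpa using hki) (hn k) fun _ _ _ => Nat.zero_le _
      omega
    · by_contra hkj
      have hlt : ∑ l ∈ Finset.Ici k, m l < ∑ l ∈ Finset.Ici j, m l :=
        strictAnti_sum_Ici hm (lt_of_not_ge hkj)
      have := hB k
      have := hm k
      omega
  · rintro ⟨hi, hj, hmj⟩
    have hIic : Finset.Iic i = Finset.univ :=
      Finset.eq_univ_of_forall fun k => Finset.mem_Iic.mpr (hi k)
    have hIci : Finset.Ici j = {j} := by
      ext k
      simpa using ⟨fun hjk => le_antisymm (hj k) hjk, fun hkj => hkj.ge⟩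
    rw [hIic, hIci, Finset.sum_singleton, hmj, add_comm]

theorem inr_eq_of_degree_eq (hm : ∀ i, 0 < m i) (hn1 : ∀ j, n j = 1) {j j' : Fin h}
    (b : Fin (n j)) (b' : Fin (n j'))
    (hd : (NSG h m n).degree (.inr ⟨j, b⟩) = (NSG h m n).degree (.inr ⟨j', b'⟩)) :
    (.inr ⟨j, b⟩ : (Σ i, Fin (m i)) ⊕ (Σ j, Fin (n j))) = .inr ⟨j', b'⟩ := by
  obtain rfl := (degree_inr_eq_degree_inr_iff hm b b').mp hd
  have : Subsingleton (Fin (n j)) := Fin.subsingleton_iff_le_one.mpr (hn1 j).le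
  rw [Subsingleton.elim b b']

variable {t : Fin h}

theorem eq_one_of_isAntiRegular (hm : ∀ i, 0 < m i) (hn : ∀ j, 0 < n j) (ht : IsTop t)
    (hG : (NSG h m n).IsAntiRegular) :
    (∀ j, n j = 1) ∧ (∀ i, i ≠ t → m i = 1) ∧ (m t = 1 ∨ m t = 2) := by
  set u : (Σ i, Fin (m i)) ⊕ (Σ j, Fin (n j)) := .inl ⟨t, ⟨0, hm t⟩⟩
  obtain ⟨w, hwu, hdw⟩ : ∃ w, w ≠ u ∧ (NSG h m n).degree w = (NSG h m n).degree u := by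
    by_cases hmt : m t = 1
    · exact ⟨.inr ⟨t, ⟨0, hn t⟩⟩, by simp [u],
        ((degree_inl_eq_degree_inr_iff hm hn _ _).mpr ⟨ht, ht, hmt⟩).symm⟩
    · have := hm t
      exact ⟨.inl ⟨t, ⟨1, by omega⟩⟩, by simp [u], degree_inl_eq _ _⟩
  have hu : ∀ a b, a ≠ b → (NSG h m n).degree a = (NSG h m n).degree b → u = a ∨ u = b :=
    fun a b hab hd => hG.eq_or_eq_of_degree_eq hwu.symm hdw.symm hab hd
  refine ⟨fun j => ?_, fun i hi => ?_, ?_⟩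
  · by_contra hnj
    have := hn j
    have := hu (.inr ⟨j, ⟨0, by omega⟩⟩) (.inr ⟨j, ⟨1, by omega⟩⟩) (by simp) (degree_inr_eq _ _)
    simp [u] at this
  · by_contra hmi
    have := hm i
    have := hu (.inl ⟨i, ⟨0, by omega⟩⟩) (.inl ⟨i, ⟨1, by omega⟩⟩) (by simp) (degree_inl_eq _ _)
    simp [u, Ne.symm hi] at this
  · have := hm t
    by_contra hmt
    have := hG.eq_or_eq_of_degree_eq (x := .inl ⟨t, ⟨1, by omega⟩⟩) (y := .inl ⟨t, ⟨0, by omega⟩⟩)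
      (a := .inl ⟨t, ⟨0, by omega⟩⟩) (b := .inl ⟨t, ⟨2, by omega⟩⟩) (by simp) (degree_inl_eq _ _)
      (by simp) (degree_inl_eq _ _)
    simp at this

theorem isAntiRegular_of_eq_one (hm : ∀ i, 0 < m i) (hn : ∀ j, 0 < n j) (ht : IsTop t)
    (hn1 : ∀ j, n j = 1) (hm1 : ∀ i, i ≠ t → m i = 1) (hmt : m t = 1 ∨ m t = 2) :
    (NSG h m n).IsAntiRegular := by
  rcases hmt with hmt | hmt
  · have hUsub : ∀ i, Subsingleton (Fin (m i)) := fun i => Fin.subsingleton_iff_le_one.mpr <| by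
      by_cases hi : i = t
      · rw [hi, hmt]
      · rw [hm1 i hi]
    have hVsub : ∀ j, Subsingleton (Fin (n j)) := fun j =>
      Fin.subsingleton_iff_le_one.mpr (hn1 j).le
    refine SimpleGraph.isAntiRegular_of_injOn_degree (u := .inl ⟨t, ⟨0, hm t⟩⟩)
      (v := .inr ⟨t, ⟨0, hn t⟩⟩) (by simp)
      ((degree_inl_eq_degree_inr_iff hm hn _ _).mpr ⟨ht, ht, hmt⟩) ?_
    rintro (⟨i, a⟩ | ⟨j, b⟩) hav (⟨i', a'⟩ | ⟨j', b'⟩) hbv hd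
    · obtain rfl := (degree_inl_eq_degree_inl_iff hn a a').mp hd
      rw [Subsingleton.elim a a']
    · obtain ⟨-, hj', -⟩ := (degree_inl_eq_degree_inr_iff hm hn a b').mp hd
      obtain rfl := le_antisymm (ht j') (hj' t)
      exact (hbv (by rw [Subsingleton.elim b' ⟨0, hn _⟩]; rfl)).elim
    · obtain ⟨-, hj, -⟩ := (degree_inl_eq_degree_inr_iff hm hn a' b).mp hd.symm
      obtain rfl := le_antisymm (ht j) (hj t)
      exact (hav (by rw [Subsingleton.elim b ⟨0, hn _⟩]; rfl)).elim
    · exact inr_eq_of_degree_eq hm hn1 b b' hd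
  · refine SimpleGraph.isAntiRegular_of_injOn_degree (u := .inl ⟨t, ⟨0, by omega⟩⟩)
      (v := .inl ⟨t, ⟨1, by omega⟩⟩) (by simp) (degree_inl_eq _ _) ?_
    rintro (⟨i, a⟩ | ⟨j, b⟩) hav (⟨i', a'⟩ | ⟨j', b'⟩) hbv hd
    · obtain rfl := (degree_inl_eq_degree_inl_iff hn a a').mp hd
      by_cases hi : i = t
      · subst hi
        simp only [Set.mem_compl_iff, Set.mem_singleton_iff, Sum.inl.injEq, Sigma.mk.injEq,
          heq_eq_eq, Fin.ext_iff, true_and] at hav hbv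
        have := a.isLt
        have := a'.isLt
        simp only [Sum.inl.injEq, Sigma.mk.injEq, heq_eq_eq, true_and]
        omega
      · have : Subsingleton (Fin (m i)) := Fin.subsingleton_iff_le_one.mpr (hm1 i hi).le
        rw [Subsingleton.elim a a']
    · obtain ⟨-, hj', hmj'⟩ := (degree_inl_eq_degree_inr_iff hm hn a b').mp hd
      obtain rfl := le_antisymm (ht j') (hj' t)
      omega
    · obtain ⟨-, hj, hmj⟩ := (degree_inl_eq_degree_inr_iff hm hn a' b).mp hd.symm
      obtain rfl := le_antisymm (ht j) (hj t)
      omega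
    · exact inr_eq_of_degree_eq hm hn1 b b' hd

theorem isAntiRegular_iff_of_isTop (hm : ∀ i, 0 < m i) (hn : ∀ j, 0 < n j) (ht : IsTop t) :
    (NSG h m n).IsAntiRegular ↔
      (∀ j, n j = 1) ∧ (∀ i, i ≠ t → m i = 1) ∧ (m t = 1 ∨ m t = 2) :=
  ⟨eq_one_of_isAntiRegular hm hn ht, fun ⟨hn1, hm1, hmt⟩ =>
    isAntiRegular_of_eq_one hm hn ht hn1 hm1 hmt⟩

end NSG

theorem nsg_antiRegular_iff (h : ℕ) (hh : 1 ≤ h) (m n : Fin h → ℕ)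
    (hm : ∀ i, 1 ≤ m i) (hn : ∀ i, 1 ≤ n i) :
    (NSG h m n).IsAntiRegular ↔
      ((∀ i, n i = 1) ∧ (∀ i : Fin h, (i : ℕ) < h - 1 → m i = 1) ∧
        (m ⟨h - 1, by omega⟩ = 1 ∨ m ⟨h - 1, by omega⟩ = 2)) := by
  classical
  set t : Fin h := ⟨h - 1, by omega⟩
  have ht : IsTop t := fun i => Fin.le_def.mpr (by simp only [t]; omega)
  have hlt_iff_ne : ∀ i : Fin h, (i : ℕ) < h - 1 ↔ i ≠ t := fun i => by
    rw [Ne, Fin.ext_iff]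
    simp only [t]
    omega
  simp only [hlt_iff_ne]
  exact NSG.isAntiRegular_iff_of_isTop hm hn ht
end
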